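/- Helly's theorem in the plane: if X_1,…,X_m (m ≥ 3) are convex subsets of ℝ² such that every 3 of them have a common point, then all m sets have a common point. -/
import Mathlib

theorem helly_plane {m : ℕ} (hm : 3 ≤ m) (X : Fin m → Set (EuclideanSpace ℝ (Fin 2)))
    (hconv : ∀ i, Convex ℝ (X i))
    (h3 : ∀ i j k : Fin m, i < j → j < k → (X i ∩ X j ∩ X k).Nonempty) :
    (⋂ i, X i).Nonempty := by
  classical
  have hrank : Module.finrank ℝ (EuclideanSpace ℝ (Fin 2)) = 2 := by
    simp [finrank_euclideanSpace]
  have := Convex.helly_theorem' (𝕜 := ℝ) (F := X) (s := Finset.univ)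
    (fun i _ => hconv i) ?_
  · simpa using this
  · intro I _ hIcard
    rw [hrank] at hIcard
    -- extend I to a set of card 3
    obtain ⟨J, hIJ, _, hJcard⟩ := Finset.exists_subsuperset_card_eq
      (Finset.subset_univ I) hIcard (by simpa [Finset.card_univ] using hm)
    have hJ : (⋂ i ∈ J, X i).Nonempty := by
      -- J has exactly 3 elements
      rw [Finset.card_eq_three] at hJcard
      obtain ⟨a, b, c, hab, hac, hbc, rfl⟩ := hJcard
      rcases lt_trichotomy a b with h1 | h1 | h1
      · rcases lt_trichotomy b c with h2 | h2 | h2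
        · obtain ⟨p, ⟨hpa, hpb⟩, hpc⟩ := h3 a b c h1 h2
          exact ⟨p, by simp [hpa, hpb, hpc]⟩
        · exact absurd h2 (by simp [hbc])
        · rcases lt_trichotomy a c with h3' | h3' | h3'
          · obtain ⟨p, ⟨hpa, hpc⟩, hpb⟩ := h3 a c b h3' h2
            exact ⟨p, by simp [hpa, hpb, hpc]⟩
          · exact absurd h3' (by simp [hac])
          · obtain ⟨p, ⟨hpc, hpa⟩, hpb⟩ := h3 c a b h3' h1
            exact ⟨p, by simp [hpa, hpb, hpc]⟩
      · exact absurd h1 (by simp [hab])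
      · rcases lt_trichotomy a c with h2 | h2 | h2
        · obtain ⟨p, ⟨hpb, hpa⟩, hpc⟩ := h3 b a c h1 h2
          exact ⟨p, by simp [hpa, hpb, hpc]⟩
        · exact absurd h2 (by simp [hac])
        · rcases lt_trichotomy b c with h3' | h3' | h3'
          · obtain ⟨p, ⟨hpb, hpc⟩, hpa⟩ := h3 b c a h3' h2
            exact ⟨p, by simp [hpa, hpb, hpc]⟩
          · exact absurd h3' (by simp [hbc])
          · obtain ⟨p, ⟨hpc, hpb⟩, hpa⟩ := h3 c b a h3' h1
            exact ⟨p, by simp [hpa, hpb, hpc]⟩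
    exact hJ.mono (Set.biInter_mono hIJ (fun _ _ => Set.Subset.rfl))
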